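/- arXiv:2101.12524 — 8 statements merged into one kernel-verified Lean document; each statement's English description precedes it below -/
import Mathlib

section
/- Let G=(U,E) be a graph with edges e_1,...,e_m and let k ≥ 2. Construct candidates C = U ∪ {c,d} ∪ F where F = F_0 ∪ ... ∪ F_m and each F_i has k-2 elements; let M consist of one voter ranking {c,d} ∪ F_0 in the top k positions, and let Q_i rank e_i ∪ F_i in the top k positions. Then under k-approval, for every subset Q' ⊆ {Q_1,...,Q_m}, candidate c is a co-winner of M ∘ Q' if and only if the edge set {e_i : Q_i ∈ Q'} is a matching in G. -/
set_option maxRecDepth 40000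


/-- Candidates for the k-approval construction: the vertices `V`, the two special
candidates `c = Sum.inr (Sum.inl 0)` and `d = Sum.inr (Sum.inl 1)`, and the filler
candidates `F = F_0 ∪ … ∪ F_m` with `F_i = {Sum.inr (Sum.inr (i, j)) : j}` of size `k-2`. -/
abbrev KACand (V : Type) (m k : ℕ) := V ⊕ (Fin 2 ⊕ (Fin (m + 1) × Fin (k - 2)))

/-- The set of `k` candidates approved (ranked in the top `k` positions) by the single
registered voter of `M`: `{c, d} ∪ F_0`. -/
def approveM (V : Type) [DecidableEq V] (m k : ℕ) : Finset (KACand V m k) :=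
  {Sum.inr (Sum.inl 0), Sum.inr (Sum.inl 1)}
    ∪ Finset.univ.image (fun j : Fin (k - 2) => Sum.inr (Sum.inr (0, j)))

/-- The set of `k` candidates approved by the unregistered voter `Q_i`: `e_i ∪ F_{i+1}`. -/
def approveQ {V : Type} [DecidableEq V] {m : ℕ} (k : ℕ) (e : Fin m → Finset V) (i : Fin m) :
    Finset (KACand V m k) :=
  (e i).image Sum.inl
    ∪ Finset.univ.image (fun j : Fin (k - 2) => Sum.inr (Sum.inr (i.succ, j)))

/-- The k-approval score of candidate `x` in the profile `M ∘ Q'`. -/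
def kaScore {V : Type} [DecidableEq V] {m : ℕ} (k : ℕ) (e : Fin m → Finset V)
    (Q' : Finset (Fin m)) (x : KACand V m k) : ℕ :=
  (if x ∈ approveM V m k then 1 else 0) + ∑ i ∈ Q', if x ∈ approveQ k e i then 1 else 0

/-- In the k-approval construction (`k ≥ 2`), for every subset `Q'` of the unregistered
voters, `c` is a co-winner of `M ∘ Q'` iff the corresponding edge set is a matching. -/
theorem kapproval_winner_iff_matching (V : Type) [Fintype V] [DecidableEq V]
    (m k : ℕ) (hk : 2 ≤ k) (e : Fin m → Finset V) (he : ∀ i, (e i).card = 2)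
    (hinj : Function.Injective e) (Q' : Finset (Fin m)) :
    (∀ x, kaScore k e Q' x ≤ kaScore k e Q' (Sum.inr (Sum.inl 0)))
      ↔ ∀ v : V, (Q'.filter (fun i => v ∈ e i)).card ≤ 1 := by
  have hc : kaScore k e Q' (Sum.inr (Sum.inl 0)) = 1 := by
    have h1 : (Sum.inr (Sum.inl 0) : KACand V m k) ∈ approveM V m k := by
      simp [approveM]
    have h2 : ∀ i, (Sum.inr (Sum.inl 0) : KACand V m k) ∉ approveQ k e i := by
      intro i
      simp [approveQ]
    simp [kaScore, h1, h2]
  have hv : ∀ v : V, kaScore k e Q' (Sum.inl v) = (Q'.filter (fun i => v ∈ e i)).card := by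
    intro v
    have h1 : (Sum.inl v : KACand V m k) ∉ approveM V m k := by
      simp [approveM]
    have h2 : ∀ i, ((Sum.inl v : KACand V m k) ∈ approveQ k e i) ↔ v ∈ e i := by
      intro i
      simp [approveQ]
    unfold kaScore
    rw [if_neg h1, zero_add, Finset.card_filter]
    exact Finset.sum_congr rfl fun i _ => if_congr (h2 i) rfl rfl
  constructor
  · intro h v
    have := h (Sum.inl v)
    rw [hc, hv] at this; exact this
  · intro h x
    rw [hc]
    match x with
    | Sum.inl v => rw [hv]; exact h v
    | Sum.inr (Sum.inl b) =>
      simp only [kaScore, approveM, approveQ]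
      simp only [Finset.mem_union, Finset.mem_insert, Finset.mem_singleton, Finset.mem_image]
      simp
      split <;> norm_num
    | Sum.inr (Sum.inr (i', j)) =>
      induction i' using Fin.cases with
      | zero => simp [kaScore, approveM, approveQ, Fin.succ_ne_zero]
      | succ i0 =>
        have : kaScore k e Q' (Sum.inr (Sum.inr (i0.succ, j)))
            = ∑ i ∈ Q', if i = i0 then 1 else 0 := by
          simp [kaScore, approveM, approveQ, Fin.succ_inj, (Fin.succ_ne_zero i0).symm]
        rw [this, Finset.sum_ite_eq' Q' i0]
        split <;> simp
end

section
/- In the Borda reduction construction from counting matchings, for every edge subset E' ⊆ E with associated profile T' = M ∘ {Q_e}_{e ∈ E'}: (a) s(T',c) = λ + n^5 + 2n^3 - 1; (b) s(T',f) < s(T',c) for every filler candidate f ∈ F; (c) if deg_{E'}(u) ≤ 1 then s(T',u) < s(T',c); and (d) if deg_{E'}(u) ≥ 2 then s(T',u) > s(T',c). Consequently c is a co-winner of T' if and only if E' is a matching in G. -/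
/-- Candidates for the Borda construction: vertices `V`, the distinguished candidate
`c = Sum.inr (Sum.inl ())`, and fillers `F` of size `n^3 - n + 1`. -/
abbrev BCand (V : Type) (n : ℕ) := V ⊕ (Unit ⊕ Fin (n ^ 3 - n + 1))

/-- The total Borda score of `x` in `T' = M ∘ {Q_e}_{e ∈ E'}`:
the score from `M` plus the scores from the chosen voters. -/
def totS {mE : ℕ} {C : Type} (sM : C → ℕ) (sQ : Fin mE → C → ℕ)
    (E' : Finset (Fin mE)) (x : C) : ℕ :=
  sM x + ∑ i ∈ E', sQ i x

/-- The number of chosen edges incident to vertex `v`. -/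
def degE {V : Type} [DecidableEq V] {mE : ℕ} (e : Fin mE → Finset V)
    (E' : Finset (Fin mE)) (v : V) : ℕ :=
  (E'.filter (fun i => v ∈ e i)).card

/-- The Borda reduction from counting matchings: with the scores of `M` and of the voters
`Q_e` as in the construction, for every edge subset `E'` with profile `T' = M ∘ {Q_e}_{e∈E'}`:
(a) `s(T',c) = λ + n^5 + 2n^3 - 1`; (b) `s(T',f) < s(T',c)` for every filler `f`;
(c) if `deg_{E'}(u) ≤ 1` then `s(T',u) < s(T',c)`; (d) if `deg_{E'}(u) ≥ 2` then
`s(T',u) > s(T',c)`; consequently `c` is a co-winner of `T'` iff `E'` is a matching. -/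
theorem borda_matching_reduction (n mE lam : ℕ) (hn : 2 ≤ n) (hmE : mE ≤ n ^ 2)
    (hlam : 0 < lam) (V : Type) [Fintype V] [DecidableEq V] (hV : Fintype.card V = n)
    (e : Fin mE → Finset V) (he : ∀ i, (e i).card = 2) (hinj : Function.Injective e)
    (sM : BCand V n → ℕ) (sQ : Fin mE → BCand V n → ℕ)
    (hMf : ∀ j, sM (Sum.inr (Sum.inr j)) < lam)
    (hMu : ∀ v, sM (Sum.inl v) = lam + n ^ 5)
    (hMc : sM (Sum.inr (Sum.inl ())) = lam + n ^ 5 + (2 * n ^ 3 - 1))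
    (hQc : ∀ i, sQ i (Sum.inr (Sum.inl ())) = 0)
    (hQin : ∀ i v, v ∈ e i → n ^ 3 ≤ sQ i (Sum.inl v) ∧ sQ i (Sum.inl v) ≤ n ^ 3 + 1)
    (hQout : ∀ i v, v ∉ e i → sQ i (Sum.inl v) ≤ n - 2)
    (hQf : ∀ i j, sQ i (Sum.inr (Sum.inr j)) < n ^ 3)
    (E' : Finset (Fin mE)) :
    totS sM sQ E' (Sum.inr (Sum.inl ())) = lam + n ^ 5 + (2 * n ^ 3 - 1)
    ∧ (∀ j, totS sM sQ E' (Sum.inr (Sum.inr j)) < totS sM sQ E' (Sum.inr (Sum.inl ())))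
    ∧ (∀ v, degE e E' v ≤ 1 →
        totS sM sQ E' (Sum.inl v) < totS sM sQ E' (Sum.inr (Sum.inl ())))
    ∧ (∀ v, 2 ≤ degE e E' v →
        totS sM sQ E' (Sum.inr (Sum.inl ())) < totS sM sQ E' (Sum.inl v))
    ∧ ((∀ x, totS sM sQ E' x ≤ totS sM sQ E' (Sum.inr (Sum.inl ())))
        ↔ ∀ v, degE e E' v ≤ 1) := by

  have hcard : E'.card ≤ n ^ 2 := le_trans (le_trans (Finset.card_le_univ E') (by simp)) hmE
  have hn3 : 1 ≤ n ^ 3 := Nat.one_le_pow _ _ (by omega)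
  have ha : totS sM sQ E' (Sum.inr (Sum.inl ())) = lam + n ^ 5 + (2 * n ^ 3 - 1) := by
    simp [totS, hMc, hQc]
  have hb : ∀ j, totS sM sQ E' (Sum.inr (Sum.inr j)) <
      totS sM sQ E' (Sum.inr (Sum.inl ())) := by
    intro j
    have hsum : ∑ i ∈ E', sQ i (Sum.inr (Sum.inr j)) ≤ E'.card * (n ^ 3 - 1) := by
      calc ∑ i ∈ E', sQ i (Sum.inr (Sum.inr j)) ≤ ∑ i ∈ E', (n ^ 3 - 1) :=
            Finset.sum_le_sum (fun i _ => by have := hQf i j; omega)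
        _ = E'.card * (n ^ 3 - 1) := by simp [Finset.sum_const, Nat.smul_one_eq_cast]
    have h2 : E'.card * (n ^ 3 - 1) ≤ n ^ 2 * n ^ 3 :=
      le_trans (Nat.mul_le_mul hcard (Nat.sub_le _ _)) le_rfl
    have h3 : n ^ 2 * n ^ 3 = n ^ 5 := by ring
    rw [ha]
    have := hMf j
    simp only [totS]
    omega
  have hc : ∀ v, degE e E' v ≤ 1 →
      totS sM sQ E' (Sum.inl v) < totS sM sQ E' (Sum.inr (Sum.inl ())) := by
    intro v hdeg
    have hsplit := Finset.sum_filter_add_sum_filter_not E' (fun i => v ∈ e i)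
      (fun i => sQ i (Sum.inl v))
    have hA : ∑ i ∈ E'.filter (fun i => v ∈ e i), sQ i (Sum.inl v) ≤ 1 * (n ^ 3 + 1) := by
      calc ∑ i ∈ E'.filter (fun i => v ∈ e i), sQ i (Sum.inl v)
          ≤ ∑ i ∈ E'.filter (fun i => v ∈ e i), (n ^ 3 + 1) :=
            Finset.sum_le_sum (fun i hi => (hQin i v (Finset.mem_filter.mp hi).2).2)
        _ = (E'.filter (fun i => v ∈ e i)).card * (n ^ 3 + 1) := by
            simp [Finset.sum_const, Nat.smul_one_eq_cast]
        _ ≤ 1 * (n ^ 3 + 1) := Nat.mul_le_mul_right _ hdeg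
    have hB : ∑ i ∈ E'.filter (fun i => ¬ v ∈ e i), sQ i (Sum.inl v) ≤ n ^ 2 * (n - 2) := by
      calc ∑ i ∈ E'.filter (fun i => ¬ v ∈ e i), sQ i (Sum.inl v)
          ≤ ∑ i ∈ E'.filter (fun i => ¬ v ∈ e i), (n - 2) :=
            Finset.sum_le_sum (fun i hi => hQout i v (Finset.mem_filter.mp hi).2)
        _ = (E'.filter (fun i => ¬ v ∈ e i)).card * (n - 2) := by
            simp [Finset.sum_const, Nat.smul_one_eq_cast]
        _ ≤ n ^ 2 * (n - 2) := Nat.mul_le_mul_right _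
            (le_trans (Finset.card_le_card (Finset.filter_subset _ _)) hcard)
    have hkey : 1 * (n ^ 3 + 1) + n ^ 2 * (n - 2) + 2 ≤ 2 * n ^ 3 := by
      obtain ⟨m, hm⟩ : ∃ m, n = m + 2 := ⟨n - 2, by omega⟩
      subst hm
      simp only [Nat.add_sub_cancel]
      nlinarith [Nat.zero_le m]
    rw [ha]
    simp only [totS, hMu v]
    omega
  have hd : ∀ v, 2 ≤ degE e E' v →
      totS sM sQ E' (Sum.inr (Sum.inl ())) < totS sM sQ E' (Sum.inl v) := by
    intro v hdeg
    have hA : 2 * n ^ 3 ≤ ∑ i ∈ E'.filter (fun i => v ∈ e i), sQ i (Sum.inl v) := by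
      calc 2 * n ^ 3 ≤ (E'.filter (fun i => v ∈ e i)).card * n ^ 3 :=
            Nat.mul_le_mul_right _ hdeg
        _ = ∑ i ∈ E'.filter (fun i => v ∈ e i), n ^ 3 := by
            simp [Finset.sum_const, Nat.smul_one_eq_cast]
        _ ≤ ∑ i ∈ E'.filter (fun i => v ∈ e i), sQ i (Sum.inl v) :=
            Finset.sum_le_sum (fun i hi => (hQin i v (Finset.mem_filter.mp hi).2).1)
    have hmono : ∑ i ∈ E'.filter (fun i => v ∈ e i), sQ i (Sum.inl v)
        ≤ ∑ i ∈ E', sQ i (Sum.inl v) :=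
      Finset.sum_le_sum_of_subset (Finset.filter_subset _ _)
    rw [ha]
    simp only [totS, hMu v]
    omega
  refine ⟨ha, hb, hc, hd, ?_⟩
  constructor
  · intro hwin v
    by_contra h
    exact absurd (hwin (Sum.inl v)) (not_le.mpr (hd v (by omega)))
  · intro hm x
    match x with
    | Sum.inl v => exact le_of_lt (hc v (hm v))
    | Sum.inr (Sum.inl ()) => exact le_rfl
    | Sum.inr (Sum.inr j) => exact le_of_lt (hb j)
end

section
/- For every binary positional scoring rule (scores in {0,1}), let Q* be the set of all unregistered voters who contribute score 1 to candidate c. If there exists any sublist Q' of the unregistered voters Q such that c is a co-winner of M ∘ Q', then c is a co-winner of M ∘ Q*. Hence CCAUV for binary positional scoring rules reduces to checking whether c wins in M ∘ Q*. -/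
/-- Under a binary positional scoring rule, a ballot is determined by the set of candidates
receiving score 1 (a set of fixed size `a`, the number of ones in the scoring vector).
The score of candidate `x` in a profile (list of ballots) `L`. -/
def binScore {C : Type} [DecidableEq C] (L : List (Finset C)) (x : C) : ℕ :=
  (L.filter (fun A => decide (x ∈ A))).length

lemma binScore_append {C : Type} [DecidableEq C] (L L' : List (Finset C)) (x : C) :
    binScore (L ++ L') x = binScore L x + binScore L' x := by
  simp [binScore, List.filter_append]

lemma binScore_le_length {C : Type} [DecidableEq C] (L : List (Finset C)) (x : C) :
    binScore L x ≤ L.length :=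
  List.length_filter_le _ _

lemma binScore_sublist {C : Type} [DecidableEq C] {L L' : List (Finset C)} (h : L.Sublist L')
    (x : C) : binScore L x ≤ binScore L' x :=
  (h.filter _).length_le

lemma binScore_self_of_all {C : Type} [DecidableEq C] (L : List (Finset C)) (c : C)
    (h : ∀ A ∈ L, c ∈ A) : binScore L c = L.length := by
  simp only [binScore]
  rw [List.length_filter_eq_length_iff]
  intro A hA; simpa using h A hA

lemma binScore_sublist_diff {C : Type} [DecidableEq C] {L L' : List (Finset C)}
    (h : L.Sublist L') (x : C) :
    binScore L' x ≤ binScore L x + (L'.length - L.length) := by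
  have hnot : (L.filter (fun A => !decide (x ∈ A))).length
      ≤ (L'.filter (fun A => !decide (x ∈ A))).length := (h.filter _).length_le
  have h1 : binScore L x + (L.filter (fun A => !decide (x ∈ A))).length = L.length := by
    simpa [binScore] using (List.length_eq_length_filter_add (l := L) (fun A => decide (x ∈ A))).symm
  have h2 : binScore L' x + (L'.filter (fun A => !decide (x ∈ A))).length = L'.length := by
    simpa [binScore] using (List.length_eq_length_filter_add (l := L') (fun A => decide (x ∈ A))).symm
  omega

/-- For every binary positional scoring rule: let `Q*` be the sublist of the unregistered
voters `Q` that contribute score 1 to `c`. If some sublist `Q' ⊆ Q` makes `c` a co-winner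
of `M ∘ Q'`, then `c` is a co-winner of `M ∘ Q*`. -/
theorem binary_rule_qstar (C : Type) [DecidableEq C] (a : ℕ) (hx : 1 ≤ a)
    (M Q : List (Finset C)) (c : C)
    (hM : ∀ A ∈ M, A.card = a) (hQ : ∀ A ∈ Q, A.card = a)
    (h : ∃ Q', Q'.Sublist Q ∧ ∀ x, binScore (M ++ Q') x ≤ binScore (M ++ Q') c) :
    ∀ x, binScore (M ++ Q.filter (fun A => decide (c ∈ A))) x
        ≤ binScore (M ++ Q.filter (fun A => decide (c ∈ A))) c := by
  obtain ⟨Q', hsub, hw⟩ := h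
  intro x
  set Qs := Q.filter (fun A => decide (c ∈ A)) with hQs
  set Q'' := Q'.filter (fun A => decide (c ∈ A)) with hQ''
  have hsubs : Q''.Sublist Qs := hsub.filter _
  have hsub' : Q''.Sublist Q' := List.filter_sublist
  have hallQ'' : ∀ A ∈ Q'', c ∈ A := by
    intro A hA
    simp only [hQ'', List.mem_filter, decide_eq_true_eq] at hA
    exact hA.2
  have hallQs : ∀ A ∈ Qs, c ∈ A := by
    intro A hA
    simp only [hQs, List.mem_filter, decide_eq_true_eq] at hA
    exact hA.2
  -- c's score in Q' equals c's score in Q'' equals length Q''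
  have hc' : binScore Q' c = Q''.length := by
    simp [binScore, hQ'']
  have hcQs : binScore Qs c = Qs.length := binScore_self_of_all Qs c hallQs
  have hcQ'' : binScore Q'' c = Q''.length := binScore_self_of_all Q'' c hallQ''
  have hwx := hw x
  rw [binScore_append, binScore_append] at hwx
  rw [binScore_append, binScore_append, hcQs]
  have hdiff := binScore_sublist_diff hsubs x
  have hx' : binScore Q'' x ≤ binScore Q' x := binScore_sublist hsub' x
  have hlen : Q''.length ≤ Qs.length := hsubs.length_le
  omega
end

section
/- In the Maximin reduction construction from #X3C: for every subset Q' ⊆ Q with T' = M ∘ Q' and E' = {e : Q_e ∈ Q'}, candidate c is a Maximin co-winner of T' if and only if E' is an exact cover of U (i.e., |E'| = q and every element of U is covered exactly once). -/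
/-- Candidates of the Maximin construction: the ground elements `U` together with
`c = Sum.inr 0`, `d = Sum.inr 1`, `w = Sum.inr 2`. -/
abbrev MMCand (U : Type) := U ⊕ Fin 3

/-- The number of chosen sets of `E' = {e i : i ∈ Q'}` containing the element `u`. -/
def degQ {U : Type} [DecidableEq U] {m : ℕ} (e : Fin m → Finset U)
    (Q' : Finset (Fin m)) (u : U) : ℕ :=
  (Q'.filter (fun i => u ∈ e i)).card

lemma sum_degQ {U : Type} [Fintype U] [DecidableEq U] {m : ℕ} (e : Fin m → Finset U)
    (he : ∀ i, (e i).card = 3) (Q' : Finset (Fin m)) :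
    ∑ u : U, degQ e Q' u = 3 * Q'.card := by
  unfold degQ
  simp only [Finset.card_filter]
  rw [Finset.sum_comm]
  have : ∀ i : Fin m, (∑ u : U, if u ∈ e i then 1 else 0) = 3 := by
    intro i
    rw [← Finset.card_filter]
    simp [Finset.filter_univ_mem, he i]
  simp [this, mul_comm]

/-- In the Maximin reduction from #X3C: given the pairwise counts `N` and Maximin scores
`s` of the profile `T' = M ∘ Q'` (satisfying the facts derived from the construction),
`c` is a Maximin co-winner of `T'` iff `E' = {e i : i ∈ Q'}` is an exact cover of `U`. -/
theorem maximin_winner_iff_exactCover (q m : ℕ) (hq : 0 < q)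
    (U : Type) [Fintype U] [DecidableEq U] (hU : Fintype.card U = 3 * q)
    (e : Fin m → Finset U) (he : ∀ i, (e i).card = 3) (hinj : Function.Injective e)
    (Q' : Finset (Fin m))
    (N : MMCand U → MMCand U → ℕ) (s : MMCand U → ℕ)
    (hs : ∀ x, s x = sInf {v | ∃ y, y ≠ x ∧ N x y = v})
    (hd : s (Sum.inr 1) = 2 * q)
    (hw : s (Sum.inr 2) = q + Q'.card)
    (hu : ∀ u : U, s (Sum.inl u) ≤ q + Q'.card)
    (hNcd : N (Sum.inr 0) (Sum.inr 1) = 2 * q + Q'.card)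
    (hNcw : N (Sum.inr 0) (Sum.inr 2) = 2 * q)
    (hNcu : ∀ u : U, N (Sum.inr 0) (Sum.inl u) + 1 = 2 * q + degQ e Q' u) :
    (∀ x, s x ≤ s (Sum.inr 0)) ↔ (Q'.card = q ∧ ∀ u : U, degQ e Q' u = 1) := by
  have hsum := sum_degQ e he Q'
  have hwmem : (2 * q : ℕ) ∈ {v | ∃ y, y ≠ (Sum.inr 0 : MMCand U) ∧ N (Sum.inr 0) y = v} :=
    ⟨Sum.inr 2, by simp, hNcw⟩
  have hscle : s (Sum.inr 0) ≤ 2 * q := by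
    rw [hs]; exact Nat.sInf_le hwmem
  constructor
  · intro hwin
    have hsc : s (Sum.inr 0) = 2 * q := le_antisymm hscle (hd ▸ hwin (Sum.inr 1))
    have hcard : Q'.card ≤ q := by
      have := hwin (Sum.inr 2); rw [hw, hsc] at this; omega
    have hdeg1 : ∀ u : U, 1 ≤ degQ e Q' u := by
      intro u
      have hmem : N (Sum.inr 0) (Sum.inl u) ∈
          {v | ∃ y, y ≠ (Sum.inr 0 : MMCand U) ∧ N (Sum.inr 0) y = v} :=
        ⟨Sum.inl u, by simp, rfl⟩
      have h1 : 2 * q ≤ N (Sum.inr 0) (Sum.inl u) := by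
        rw [← hsc, hs]; exact Nat.sInf_le hmem
      have := hNcu u; omega
    have hge : 3 * q ≤ ∑ u : U, degQ e Q' u := by
      calc 3 * q = ∑ _u : U, 1 := by simp [hU]
        _ ≤ ∑ u : U, degQ e Q' u := Finset.sum_le_sum fun u _ => hdeg1 u
    have hcq : Q'.card = q := by omega
    refine ⟨hcq, ?_⟩
    have heq : ∑ u : U, degQ e Q' u = ∑ _u : U, 1 := by
      simp [hsum, hcq, hU]
    have := (Finset.sum_eq_sum_iff_of_le (fun u _ => hdeg1 u)).mp heq.symm
    intro u
    exact ((this u (Finset.mem_univ u))).symm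
  · rintro ⟨hcq, hdeg⟩ x
    have hNcu' : ∀ u : U, N (Sum.inr 0) (Sum.inl u) = 2 * q := by
      intro u; have := hNcu u; rw [hdeg u] at this; omega
    have hsc : s (Sum.inr 0) = 2 * q := by
      rw [hs]
      refine le_antisymm (Nat.sInf_le hwmem) (le_csInf ⟨2 * q, hwmem⟩ ?_)
      rintro b ⟨y, hy, rfl⟩
      rcases y with u | j
      · rw [hNcu' u]
      · fin_cases j
        · simp at hy
        · show 2 * q ≤ N (Sum.inr 0) (Sum.inr 1); rw [hNcd]; omega
        · show 2 * q ≤ N (Sum.inr 0) (Sum.inr 2); rw [hNcw]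
    rw [hsc]
    rcases x with u | j
    · have := hu u; omega
    · fin_cases j
      · show s (Sum.inr 0) ≤ 2 * q; omega
      · show s (Sum.inr 1) ≤ 2 * q; omega
      · show s (Sum.inr 2) ≤ 2 * q; rw [hw]; omega
end

section
/- In the Condorcet reduction construction from #X3C, there is a bijection between the sub-profiles Q_2' ⊆ Q_2 such that c is a Condorcet winner of M_2 ∘ Q_2', and the sub-profiles Q_1' ⊆ Q_1 with |Q_1'| ≤ q such that c is a Condorcet winner of M_1 ∘ Q_1'. In particular, if |Q_2'| > q then c is not a Condorcet winner of M_2 ∘ Q_2'. -/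
/-- Candidate `x` is a Condorcet winner of a profile with pairwise counts `N`
if `N x y > N y x` for every `y ≠ x`. -/
def CondorcetWinner {C : Type} (N : C → C → ℕ) (x : C) : Prop :=
  ∀ y, y ≠ x → N y x < N x y

/-- The Condorcet reduction from #X3C: `N1 E'` (resp. `N2 E'`) are the pairwise counts of
the profile `M_1 ∘ {Q_1^e}_{e ∈ E'}` (resp. `M_2 ∘ {Q_2^e}_{e ∈ E'}`), where in the first
construction the candidates are `U ⊕ Unit` with `c = Sum.inr ()`, and in the second they
are `U ⊕ Fin 2` with `c = Sum.inr 0` and `d = Sum.inr 1`. With the key facts relating the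
two constructions, for every `E'`: `c` is a Condorcet winner of `M_2 ∘ Q_2'` iff
(`|E'| ≤ q` and `c` is a Condorcet winner of `M_1 ∘ Q_1'`); in particular if `|E'| > q`
then `c` is not a Condorcet winner of `M_2 ∘ Q_2'`. This is the claimed bijection
(the identity correspondence on subsets of `E`). -/
theorem condorcet_reduction_bijection (q m : ℕ) (U : Type) [Fintype U] [DecidableEq U]
    (N1 : Finset (Fin m) → (U ⊕ Unit) → (U ⊕ Unit) → ℕ)
    (N2 : Finset (Fin m) → (U ⊕ Fin 2) → (U ⊕ Fin 2) → ℕ)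
    (h1 : ∀ E' u, N2 E' (Sum.inl u) (Sum.inr 0) = N1 E' (Sum.inl u) (Sum.inr ()) + 2)
    (h2 : ∀ E' u, N2 E' (Sum.inr 0) (Sum.inl u) = N1 E' (Sum.inr ()) (Sum.inl u) + 2)
    (h3 : ∀ E', N2 E' (Sum.inr 0) (Sum.inr 1) = q + 1)
    (h4 : ∀ E', N2 E' (Sum.inr 1) (Sum.inr 0) = E'.card) :
    ∀ E' : Finset (Fin m),
      (CondorcetWinner (N2 E') (Sum.inr 0)
        ↔ (E'.card ≤ q ∧ CondorcetWinner (N1 E') (Sum.inr ())))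
      ∧ (q < E'.card → ¬ CondorcetWinner (N2 E') (Sum.inr 0)) := by
  intro E'
  have main : CondorcetWinner (N2 E') (Sum.inr 0)
      ↔ (E'.card ≤ q ∧ CondorcetWinner (N1 E') (Sum.inr ())) := by
    constructor
    · intro h
      constructor
      · have := h (Sum.inr 1) (by simp)
        rw [h3, h4] at this
        omega
      · intro y hy
        match y with
        | Sum.inl u =>
          have := h (Sum.inl u) (by simp)
          rw [h1, h2] at this
          omega
        | Sum.inr () => exact absurd rfl hy
    · rintro ⟨hcard, h⟩ y hy
      match y with
      | Sum.inl u =>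
        have := h (Sum.inl u) (by simp)
        rw [h1, h2]
        omega
      | Sum.inr 0 => exact absurd rfl hy
      | Sum.inr 1 =>
        rw [h3, h4]
        omega
  exact ⟨main, fun hq hcw => absurd (main.mp hcw).1 (by omega)⟩
end

section
/- Score-shift invariance for R(f,ℓ): let T_1 be a profile over candidate set C under f-approval, and let T_2 over C' = C ∪ {d_1,...,d_ℓ} be obtained by appending d_1,...,d_ℓ at the bottom of every voter's ranking. Then under the scoring rule R(f,ℓ) = (2,...,2,1,...,1,0,...,0) (f twos, ℓ zeros), every voter contributes 0 to each d_j and contributes s(T_i^1,c)+1 to each c ∈ C. Consequently, for the same participation probabilities, for every c ∈ C the probability that c is a co-winner of the random profile under f-approval on C equals the probability that c is a co-winner of the random profile under R(f,ℓ) on C'. -/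
noncomputable def subsetPr {n : ℕ} (p : Fin n → ℝ) (U : Finset (Fin n)) : ℝ :=
  (∏ i ∈ U, p i) * ∏ i ∈ Uᶜ, (1 - p i)

open Classical in
noncomputable def prEvent {n : ℕ} (p : Fin n → ℝ) (E : Finset (Fin n) → Prop) : ℝ :=
  ∑ U ∈ Finset.univ.filter E, subsetPr p U

/-- The scoring vector of `R(f,ℓ)` over `m'` candidates: the first `f` positions score `2`,
the last `ℓ` positions score `0`, and the positions in between score `1`. -/
def Rvec (f l m' pos : ℕ) : ℕ := if pos < f then 2 else if pos + l < m' then 1 else 0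

/-- The f-approval score that voter `i` (with ranking `π i`) gives to candidate `c`. -/
def aSc {n m : ℕ} {C : Type} (π : Fin n → C ≃ Fin m) (f : ℕ) (i : Fin n) (c : C) : ℕ :=
  if (π i c : ℕ) < f then 1 else 0

/-- The position, in voter `i`'s extended ranking over `C ⊕ Fin l`, of candidate `x`:
the ranking of `C` is kept and the new candidates `d_1, …, d_ℓ` are appended at the bottom. -/
def pos2 {n m : ℕ} {C : Type} (π : Fin n → C ≃ Fin m) (l : ℕ) (i : Fin n) :
    C ⊕ Fin l → ℕ :=
  Sum.elim (fun c => (π i c : ℕ)) (fun j => m + (j : ℕ))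

/-- The `R(f,ℓ)` score that voter `i` gives to candidate `x` in the extended election. -/
def rSc {n m : ℕ} {C : Type} (π : Fin n → C ≃ Fin m) (f l : ℕ) (i : Fin n)
    (x : C ⊕ Fin l) : ℕ :=
  Rvec f l (m + l) (pos2 π l i x)

/-- Score-shift invariance for `R(f,ℓ)`: appending the new candidates at the bottom of
every ranking makes every voter contribute `0` to each new candidate and `s+1` to each
original candidate (where `s` is its f-approval contribution); consequently, for the same
participation probabilities, the probability that `c ∈ C` is a co-winner under f-approval
equals the probability that `c` is a co-winner under `R(f,ℓ)` on `C ∪ {d_1,…,d_ℓ}`. -/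
theorem rfl_shift_invariance (n m f l : ℕ) (hf1 : 1 ≤ f) (hfm : f ≤ m)
    (C : Type) [Fintype C] [DecidableEq C] (hC : Fintype.card C = m)
    (π : Fin n → C ≃ Fin m) (p : Fin n → ℝ) (hp : ∀ i, 0 ≤ p i ∧ p i ≤ 1) :
    (∀ (i : Fin n) (j : Fin l), rSc π f l i (Sum.inr j) = 0)
    ∧ (∀ (i : Fin n) (c : C), rSc π f l i (Sum.inl c) = aSc π f i c + 1)
    ∧ ∀ c : C,
        prEvent p (fun I => ∀ c', ∑ i ∈ I, aSc π f i c' ≤ ∑ i ∈ I, aSc π f i c)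
          = prEvent p (fun I => ∀ x : C ⊕ Fin l,
              ∑ i ∈ I, rSc π f l i x ≤ ∑ i ∈ I, rSc π f l i (Sum.inl c)) := by
  have h1 : ∀ (i : Fin n) (j : Fin l), rSc π f l i (Sum.inr j) = 0 := by
    intro i j
    rw [rSc, pos2, Sum.elim_inr, Rvec]
    rw [if_neg (by omega), if_neg (by omega)]
  have h2 : ∀ (i : Fin n) (c : C), rSc π f l i (Sum.inl c) = aSc π f i c + 1 := by
    intro i c
    have hlt : (π i c : ℕ) < m := (π i c).isLt
    rw [rSc, pos2, Sum.elim_inl, Rvec, aSc]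
    by_cases h : (π i c : ℕ) < f
    · rw [if_pos h, if_pos h]
    · rw [if_neg h, if_neg h, if_pos (by omega)]
  refine ⟨h1, h2, fun c => ?_⟩
  unfold prEvent
  congr 1
  ext I
  simp only [Finset.mem_filter, Finset.mem_univ, true_and]
  constructor
  · intro h x
    cases x with
    | inl c' =>
        simp only [h2, Finset.sum_add_distrib]
        exact Nat.add_le_add_right (h c') _
    | inr j =>
        simp only [h1, Finset.sum_const_zero]
        exact Nat.zero_le _
  · intro h c'
    have := h (Sum.inl c')
    simp only [h2, Finset.sum_add_distrib] at this
    omega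
end

section
/- In the R(f,ℓ)-reduction from 3DM (case f ≥ 2, ℓ ≥ 1): for every subset Q' ⊆ Q with E' the corresponding set of triples, c is a co-winner of M ∘ Q' if and only if E' is a perfect 3-dimensional matching (|E'| = q and every element of X ∪ Y ∪ Z is covered exactly once). -/
/-- Candidates of the `R(f,ℓ)`-reduction from 3DM: the ground elements
`U = X ∪ Y ∪ Z` (encoded as `Fin 3 × Fin q`, first component `0`/`1`/`2` for `X`/`Y`/`Z`),
the dummy candidates `W_1` (size `f-2`) and `W_2` (size `ℓ-1`), and `c = Sum.inr (Sum.inr 0)`,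
`d = Sum.inr (Sum.inr 1)`. -/
abbrev DMCand (q f l : ℕ) := (Fin 3 × Fin q) ⊕ ((Fin (f - 2) ⊕ Fin (l - 1)) ⊕ Fin 2)

/-- Triple `e i = (x,y,z)` covers the ground element `u`. -/
def covers {q m : ℕ} (e : Fin m → Fin q × Fin q × Fin q) (i : Fin m)
    (u : Fin 3 × Fin q) : Prop :=
  (u.1 = 0 ∧ u.2 = (e i).1) ∨ (u.1 = 1 ∧ u.2 = (e i).2.1) ∨ (u.1 = 2 ∧ u.2 = (e i).2.2)

open Classical in
/-- The number of chosen triples of `E' = {e i : i ∈ Q'}` covering `u`. -/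
noncomputable def deg3 {q m : ℕ} (e : Fin m → Fin q × Fin q × Fin q)
    (Q' : Finset (Fin m)) (u : Fin 3 × Fin q) : ℕ :=
  (Q'.filter (fun i => covers e i u)).card


open Classical in
lemma sum_deg3 {q m : ℕ} (e : Fin m → Fin q × Fin q × Fin q) (Q' : Finset (Fin m))
    (j : Fin 3) : ∑ v : Fin q, deg3 e Q' (j, v) = Q'.card := by
  unfold deg3
  simp only [Finset.card_filter]
  rw [Finset.sum_comm]
  have : ∀ i ∈ Q', (∑ v : Fin q, if covers e i (j, v) then 1 else 0) = 1 := by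
    intro i _
    fin_cases j <;>
      simp [covers, Finset.sum_ite_eq' Finset.univ, show ((0:Fin 3) ≠ 1) by decide,
        show ((0:Fin 3) ≠ 2) by decide, show ((1:Fin 3) ≠ 0) by decide,
        show ((1:Fin 3) ≠ 2) by decide, show ((2:Fin 3) ≠ 0) by decide,
        show ((2:Fin 3) ≠ 1) by decide]
  rw [Finset.sum_congr rfl this, Finset.sum_const, smul_eq_mul, mul_one]

lemma eq_one_of_le {q : ℕ} (g : Fin q → ℕ) (h1 : ∀ v, g v ≤ 1)
    (h2 : ∑ v, g v = q) (v : Fin q) : g v = 1 := by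
  have he := Finset.sum_erase_add Finset.univ g (Finset.mem_univ v)
  rw [h2] at he
  have hle : ∑ w ∈ Finset.univ.erase v, g w ≤ (Finset.univ.erase v).card := by
    simpa using Finset.sum_le_sum (fun w (_ : w ∈ Finset.univ.erase v) => h1 w)
  have hcard : (Finset.univ.erase v).card = q - 1 := by
    simp [Finset.card_erase_of_mem]
  have hv := v.pos
  have := h1 v
  omega

lemma eq_one_of_ge {q : ℕ} (g : Fin q → ℕ) (h1 : ∀ v, 1 ≤ g v)
    (h2 : ∑ v, g v = q) (v : Fin q) : g v = 1 := by
  have he := Finset.sum_erase_add Finset.univ g (Finset.mem_univ v)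
  rw [h2] at he
  have hle : (Finset.univ.erase v).card ≤ ∑ w ∈ Finset.univ.erase v, g w := by
    simpa using Finset.sum_le_sum (fun w (_ : w ∈ Finset.univ.erase v) => h1 w)
  have hcard : (Finset.univ.erase v).card = q - 1 := by
    simp [Finset.card_erase_of_mem]
  have hv := v.pos
  have := h1 v
  omega

/-- The `R(f,ℓ)`-reduction from 3DM (case `f ≥ 2`, `ℓ ≥ 1`): given the total scores `S Q'`
of the profile `M ∘ Q'` satisfying the facts derived from the construction, `c` is a
co-winner of `M ∘ Q'` iff `E'` is a perfect 3-dimensional matching (`|E'| = q` and every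
ground element is covered exactly once). -/
theorem rfl_3dm_reduction (q m f l lam : ℕ) (hq : 0 < q) (hf : 2 ≤ f) (hl : 1 ≤ l)
    (hlam : 0 < lam) (e : Fin m → Fin q × Fin q × Fin q) (hinj : Function.Injective e)
    (S : Finset (Fin m) → DMCand q f l → ℕ)
    (hc : ∀ Q', S Q' (Sum.inr (Sum.inr 0)) = lam + 2 * m + Q'.card)
    (hd : ∀ Q', S Q' (Sum.inr (Sum.inr 1)) ≤ lam + m)
    (hw : ∀ Q' (w : Fin (f - 2) ⊕ Fin (l - 1)), S Q' (Sum.inr (Sum.inl w)) ≤ lam + 2 * m)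
    (hxy : ∀ Q' (u : Fin 3 × Fin q), u.1 ≠ 2 →
      S Q' (Sum.inl u) + 1 = S Q' (Sum.inr (Sum.inr 0)) + deg3 e Q' u)
    (hz : ∀ Q' (u : Fin 3 × Fin q), u.1 = 2 →
      S Q' (Sum.inl u) + deg3 e Q' u = S Q' (Sum.inr (Sum.inr 0)) + 1) :
    ∀ Q' : Finset (Fin m),
      (∀ x, S Q' x ≤ S Q' (Sum.inr (Sum.inr 0)))
        ↔ (Q'.card = q ∧ ∀ u : Fin 3 × Fin q, deg3 e Q' u = 1) := by
  intro Q'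
  constructor
  · intro h
    have hxy' : ∀ u : Fin 3 × Fin q, u.1 ≠ 2 → deg3 e Q' u ≤ 1 := by
      intro u hu
      have h1 := hxy Q' u hu
      have h2 := h (Sum.inl u)
      omega
    have hz' : ∀ u : Fin 3 × Fin q, u.1 = 2 → 1 ≤ deg3 e Q' u := by
      intro u hu
      have h1 := hz Q' u hu
      have h2 := h (Sum.inl u)
      omega
    have s0 := sum_deg3 e Q' 0
    have s2 := sum_deg3 e Q' 2
    have hle : Q'.card ≤ q := by
      rw [← s0]
      calc ∑ v : Fin q, deg3 e Q' (0, v) ≤ ∑ _v : Fin q, 1 :=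
          Finset.sum_le_sum (fun v _ => hxy' (0, v) (show (0 : Fin 3) ≠ 2 by decide))
        _ = q := by simp
    have hge : q ≤ Q'.card := by
      rw [← s2]
      calc (q : ℕ) = ∑ _v : Fin q, 1 := by simp
        _ ≤ ∑ v : Fin q, deg3 e Q' (2, v) :=
          Finset.sum_le_sum (fun v _ => hz' (2, v) rfl)
    have hcard : Q'.card = q := le_antisymm hle hge
    refine ⟨hcard, ?_⟩
    intro u
    obtain ⟨j, v⟩ := u
    by_cases hj : j = 2
    · subst hj
      exact eq_one_of_ge (fun v => deg3 e Q' (2, v)) (fun v => hz' (2, v) rfl)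
        (by rw [sum_deg3, hcard]) v
    · exact eq_one_of_le (fun v => deg3 e Q' (j, v)) (fun v => hxy' (j, v) hj)
        (by rw [sum_deg3, hcard]) v
  · rintro ⟨hcard, hdeg⟩ x
    match x with
    | Sum.inl u =>
      by_cases hj : u.1 = 2
      · have h1 := hz Q' u hj
        have h2 := hdeg u
        omega
      · have h1 := hxy Q' u hj
        have h2 := hdeg u
        omega
    | Sum.inr (Sum.inl w) =>
      have h1 := hw Q' w
      have h2 := hc Q'
      omega
    | Sum.inr (Sum.inr k) =>
      fin_cases k
      · exact le_refl _
      · have h1 : S Q' (Sum.inr (Sum.inr 1)) ≤ lam + m := hd Q'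
        have h2 := hc Q'
        exact le_trans (le_of_eq rfl) (le_trans h1 (by omega))
end

section
/- Under the veto rule, the probability that c is a co-winner equals Σ_{b=0}^{n} Pr[b(T',c) = b] · Π_{c' ≠ c} Pr[b(T',c') ≥ b], where b(T',x) is the number of participating voters who rank x last; this holds because the bottom-counts of distinct candidates are probabilistically independent. -/
/-- The bottom count of candidate `x` when the participating voters are `U`;
`lastC i` is the candidate ranked last by voter `i`. -/
def bCount {n m : ℕ} (lastC : Fin n → Fin m) (U : Finset (Fin n)) (x : Fin m) : ℕ :=
  (U.filter (fun i => lastC i = x)).card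

/-!
Group the voters by the candidate they rank last. The bottom count of `x` only depends on which
voters of the block `{i | lastC i = x}` participate, and under independent participation events
that depend on disjoint blocks of voters are independent: the participation weight of `U` splits
as a product over `S` and `Sᶜ`, and so does the sum over all `U`. Hence the bottom counts of
distinct candidates are independent, and conditioning on the value `b ≤ n` of the bottom count of
`c` gives the formula.
-/

open Finset

theorem Finset.sum_inter_mul_inter_compl {α R : Type*} [Fintype α] [DecidableEq α]
    [CommSemiring R] (S : Finset α) (f g : Finset α → R) :
    ∑ U, f (U ∩ S) * g (U ∩ Sᶜ) = (∑ W ∈ S.powerset, f W) * ∑ V ∈ Sᶜ.powerset, g V := by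
  rw [sum_mul_sum, ← sum_product']
  refine sum_nbij' (fun U => (U ∩ S, U ∩ Sᶜ)) (fun q => q.1 ∪ q.2) (fun U _ => by simp)
    (fun q _ => by simp) (fun U _ => by simp [← inter_union_distrib_left]) ?_ fun _ _ => rfl
  rintro ⟨W, V⟩ hWV
  simp only [mem_product, mem_powerset] at hWV
  obtain ⟨hW, hV⟩ := hWV
  simp only [Prod.mk.injEq]
  constructor <;> ext i <;> have hWi := @hW i <;> have hVi := @hV i <;>
    simp only [mem_union, mem_inter, mem_compl] at hVi ⊢ <;> tauto

section Participation

open Classical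

variable {n : ℕ} (p : Fin n → ℝ)

noncomputable def blockPr (S W : Finset (Fin n)) : ℝ :=
  (∏ i ∈ W, p i) * ∏ i ∈ S \ W, (1 - p i)

theorem sum_blockPr_powerset (S : Finset (Fin n)) : ∑ W ∈ S.powerset, blockPr p S W = 1 := by
  simp [blockPr, ← prod_add]

theorem blockPr_inter (S U : Finset (Fin n)) :
    blockPr p S (U ∩ S) = ∏ i ∈ S, if i ∈ U then p i else 1 - p i := by
  rw [blockPr, prod_ite, filter_mem_eq_inter, filter_not, filter_mem_eq_inter, inter_comm S U,
    sdiff_inter_self_right]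

theorem subsetPr_eq_blockPr_univ (U : Finset (Fin n)) : subsetPr p U = blockPr p univ U := by
  rw [subsetPr, blockPr, compl_eq_univ_sdiff]

theorem sum_subsetPr : ∑ U, subsetPr p U = 1 := by
  simp_rw [subsetPr_eq_blockPr_univ]
  rw [← powerset_univ, sum_blockPr_powerset]

theorem subsetPr_eq_blockPr_mul_blockPr (S U : Finset (Fin n)) :
    subsetPr p U = blockPr p S (U ∩ S) * blockPr p Sᶜ (U ∩ Sᶜ) := by
  rw [blockPr_inter, blockPr_inter, prod_mul_prod_compl, ← blockPr_inter, inter_univ,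
    subsetPr_eq_blockPr_univ]

theorem sum_subsetPr_mul_mul (S : Finset (Fin n)) (f g : Finset (Fin n) → ℝ) :
    ∑ U, subsetPr p U * (f (U ∩ S) * g (U ∩ Sᶜ))
      = (∑ W ∈ S.powerset, blockPr p S W * f W) * ∑ V ∈ Sᶜ.powerset, blockPr p Sᶜ V * g V := by
  rw [← sum_inter_mul_inter_compl]
  refine sum_congr rfl fun U _ => ?_
  rw [subsetPr_eq_blockPr_mul_blockPr p S]
  ring

theorem prEvent_eq_sum_mul_ite (E : Finset (Fin n) → Prop) :
    prEvent p E = ∑ U, subsetPr p U * if E U then 1 else 0 := by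
  simp [prEvent, sum_filter]

theorem prEvent_true : prEvent p (fun _ => True) = 1 := by
  simp [prEvent, sum_subsetPr]

theorem prEvent_eq_sum_powerset (S : Finset (Fin n)) {E : Finset (Fin n) → Prop}
    (hE : ∀ U, E U ↔ E (U ∩ S)) :
    prEvent p E = ∑ W ∈ S.powerset, blockPr p S W * if E W then 1 else 0 := by
  have h := sum_subsetPr_mul_mul p S (fun W => if E W then 1 else 0) 1
  simp only [Pi.one_apply, mul_one, sum_blockPr_powerset, ← hE] at h
  rw [prEvent_eq_sum_mul_ite, h]

theorem prEvent_and_of_local (S : Finset (Fin n)) {E F : Finset (Fin n) → Prop}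
    (hE : ∀ U, E U ↔ E (U ∩ S)) (hF : ∀ U, F U ↔ F (U ∩ Sᶜ)) :
    prEvent p (fun U => E U ∧ F U) = prEvent p E * prEvent p F := by
  rw [prEvent_eq_sum_powerset p S hE, prEvent_eq_sum_powerset p Sᶜ hF, ← sum_subsetPr_mul_mul,
    prEvent_eq_sum_mul_ite]
  refine sum_congr rfl fun U _ => ?_
  simp only [hE U, hF U, ite_zero_mul_ite_zero, one_mul]

theorem prEvent_eq_sum_range (f : Finset (Fin n) → ℕ) {N : ℕ} (hf : ∀ U, f U ≤ N)
    (E : Finset (Fin n) → Prop) :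
    prEvent p E = ∑ b ∈ range (N + 1), prEvent p (fun U => f U = b ∧ E U) := by
  rw [prEvent, ← sum_fiberwise_of_maps_to (g := f) (t := range (N + 1))
    fun U _ => mem_range.2 (Nat.lt_succ_of_le (hf U))]
  refine sum_congr rfl fun b _ => ?_
  rw [prEvent, filter_filter]
  simp only [and_comm]

end Participation

section BottomCounts

variable {n m : ℕ} (p : Fin n → ℝ) (lastC : Fin n → Fin m)

theorem bCount_le (U : Finset (Fin n)) (x : Fin m) : bCount lastC U x ≤ n :=
  (card_filter_le _ _).trans (card_le_univ U |>.trans_eq (Fintype.card_fin n))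

theorem bCount_inter {S : Finset (Fin n)} {x : Fin m} (hS : ∀ i, lastC i = x → i ∈ S)
    (U : Finset (Fin n)) : bCount lastC (U ∩ S) x = bCount lastC U x := by
  rw [bCount, bCount, ← filter_inter, inter_eq_left.2]
  exact fun i hi => hS i (mem_filter.1 hi).2

theorem prEvent_bCount_and {a : Fin m} {T : Finset (Fin m)} (ha : a ∉ T) (Q : ℕ → Prop)
    (R : Fin m → ℕ → Prop) :
    prEvent p (fun U => Q (bCount lastC U a) ∧ ∀ x ∈ T, R x (bCount lastC U x))
      = prEvent p (fun U => Q (bCount lastC U a))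
        * prEvent p (fun U => ∀ x ∈ T, R x (bCount lastC U x)) := by
  refine prEvent_and_of_local p {i | lastC i = a} (fun U => ?_) (fun U => ?_)
  · rw [bCount_inter lastC (fun i hi => by simpa using hi)]
  · refine forall₂_congr fun x hx => ?_
    rw [bCount_inter lastC fun i hi => ?_]
    simp only [mem_compl, mem_filter, mem_univ, true_and, hi]
    rintro rfl
    exact ha hx

theorem prEvent_forall_bCount (T : Finset (Fin m)) (R : Fin m → ℕ → Prop) :
    prEvent p (fun U => ∀ x ∈ T, R x (bCount lastC U x))
      = ∏ x ∈ T, prEvent p (fun U => R x (bCount lastC U x)) := by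
  induction T using Finset.induction_on with
  | empty => simpa using prEvent_true p
  | insert a T ha ih =>
    simp only [forall_mem_insert, prod_insert ha, ← ih]
    exact prEvent_bCount_and p lastC ha _ R

end BottomCounts

theorem veto_win_prob_general (n m : ℕ) (p : Fin n → ℝ)
    (lastC : Fin n → Fin m) (c : Fin m) :
    prEvent p (fun U => ∀ x, bCount lastC U c ≤ bCount lastC U x)
      = ∑ b ∈ Finset.range (n + 1),
          prEvent p (fun U => bCount lastC U c = b)
            * ∏ x ∈ Finset.univ.erase c,
                prEvent p (fun U => b ≤ bCount lastC U x) := by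
  rw [prEvent_eq_sum_range p (bCount lastC · c) (bCount_le lastC · c)]
  refine sum_congr rfl fun b _ => ?_
  rw [← prEvent_forall_bCount,
    ← prEvent_bCount_and p lastC (notMem_erase c univ) (· = b) fun _ k => b ≤ k]
  congr 1
  ext U
  refine and_congr_right fun hc => ⟨fun h x _ => hc ▸ h x, fun h x => ?_⟩
  by_cases hx : x = c
  · rw [hx]
  · exact hc ▸ h x (mem_erase.2 ⟨hx, mem_univ x⟩)

/-- Under veto with independent voters, the probability that `c` is a co-winner (its
bottom count is minimal) equals `∑_{b=0}^{n} Pr[b(T',c) = b] · ∏_{c' ≠ c} Pr[b(T',c') ≥ b]`,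
since the bottom counts of distinct candidates are independent. -/
theorem veto_win_prob (n m : ℕ) (p : Fin n → ℝ) (hp : ∀ i, 0 ≤ p i ∧ p i ≤ 1)
    (lastC : Fin n → Fin m) (c : Fin m) :
    prEvent p (fun U => ∀ x, bCount lastC U c ≤ bCount lastC U x)
      = ∑ b ∈ Finset.range (n + 1),
          prEvent p (fun U => bCount lastC U c = b)
            * ∏ x ∈ Finset.univ.erase c,
                prEvent p (fun U => b ≤ bCount lastC U x) :=
  veto_win_prob_general n m p lastC c
end
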